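/- arXiv:2512.02927 — 4 statements merged into one kernel-verified Lean document; each statement's English description precedes it below -/
import Mathlib

section
/- Let R be a complete DVR with maximal ideal l and T a commutative R-algebra, finite free as an R-module. Suppose Θ', Θ'' : T → R are two R-algebra homomorphisms whose reductions mod l agree, and suppose there is a T-module isomorphism Ψ : Hom_R(T, R) ≅ T. Then Ψ(Θ') ∉ lT, Ψ(Θ'') ∉ lT, and Ψ(Θ') − Ψ(Θ'') ∈ lT. -/
/-- Let `R` be a complete DVR with maximal ideal `l` and `T` a commutative
`R`-algebra, finite free as an `R`-module.  Suppose `Θ', Θ'' : T → R` are `R`-algebra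
homomorphisms whose reductions mod `l` agree, and `Ψ : Hom_R(T,R) ≅ T` is a `T`-module
isomorphism, where `T` acts on `Hom_R(T,R)` by `(t·f)(x) = f(t·x)`.  Then
`Ψ(Θ') ∉ lT`, `Ψ(Θ'') ∉ lT`, and `Ψ(Θ') − Ψ(Θ'') ∈ lT`. -/
theorem psi_theta_congruence (R T : Type*) [CommRing R] [IsDomain R]
    [IsDiscreteValuationRing R] [IsAdicComplete (IsLocalRing.maximalIdeal R) R]
    [CommRing T] [Algebra R T] [Module.Finite R T] [Module.Free R T]
    (Θ' Θ'' : T →ₐ[R] R)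
    (hcong : ∀ t : T, Θ' t - Θ'' t ∈ IsLocalRing.maximalIdeal R)
    (Ψ : (T →ₗ[R] R) ≃ₗ[R] T)
    (hΨ : ∀ (t : T) (f : T →ₗ[R] R), Ψ (f ∘ₗ LinearMap.mulLeft R t) = t * Ψ f) :
    Ψ Θ'.toLinearMap ∉ Ideal.map (algebraMap R T) (IsLocalRing.maximalIdeal R) ∧
    Ψ Θ''.toLinearMap ∉ Ideal.map (algebraMap R T) (IsLocalRing.maximalIdeal R) ∧
    Ψ Θ'.toLinearMap - Ψ Θ''.toLinearMap ∈
      Ideal.map (algebraMap R T) (IsLocalRing.maximalIdeal R) := by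
  obtain ⟨π, hπ⟩ := IsDiscreteValuationRing.exists_irreducible R
  have hπ0 : π ≠ 0 := hπ.ne_zero
  have hspan : IsLocalRing.maximalIdeal R = Ideal.span {π} := hπ.maximalIdeal_eq
  have hmap : Ideal.map (algebraMap R T) (IsLocalRing.maximalIdeal R)
      = Ideal.span {algebraMap R T π} := by
    rw [hspan, Ideal.map_span, Set.image_singleton]
  have key : ∀ Θ : T →ₐ[R] R,
      Ψ Θ.toLinearMap ∉ Ideal.map (algebraMap R T) (IsLocalRing.maximalIdeal R) := by
    intro Θ hmem
    rw [hmap, Ideal.mem_span_singleton] at hmem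
    obtain ⟨x, hx⟩ := hmem
    have hx' : Ψ Θ.toLinearMap = π • x := by rw [hx, Algebra.smul_def]
    have h1 : Θ.toLinearMap = π • Ψ.symm x := by
      have := congrArg Ψ.symm hx'
      rwa [Ψ.symm_apply_apply, map_smul] at this
    have h2 : (1 : R) = π * (Ψ.symm x 1) := by
      have := congrArg (fun f : T →ₗ[R] R => f 1) h1
      simpa [smul_eq_mul] using this
    exact hπ.not_isUnit (IsUnit.of_mul_eq_one (a := π) _ h2.symm)
  refine ⟨key Θ', key Θ'', ?_⟩
  choose c hc using fun t => Ideal.mem_span_singleton.mp (hspan ▸ hcong t)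
  have hcancel : ∀ {a b : R}, π * a = π * b → a = b := fun h => mul_left_cancel₀ hπ0 h
  let g : T →ₗ[R] R :=
    { toFun := c
      map_add' := fun x y => by
        apply hcancel
        rw [← hc, mul_add, ← hc, ← hc, map_add, map_add]
        ring
      map_smul' := fun r x => by
        apply hcancel
        simp only [RingHom.id_apply, smul_eq_mul]
        rw [← hc]
        have : Θ' (r • x) - Θ'' (r • x) = r * (Θ' x - Θ'' x) := by
          simp [Algebra.smul_def, mul_sub]
        rw [this, hc]
        ring }
  have hg : Θ'.toLinearMap - Θ''.toLinearMap = π • g := by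
    ext t
    simpa [g, smul_eq_mul] using hc t
  have : Ψ Θ'.toLinearMap - Ψ Θ''.toLinearMap = π • Ψ g := by
    rw [← map_sub, ← map_smul, hg]
  rw [this, hmap, Algebra.smul_def]
  exact Ideal.mul_mem_right _ _ (Ideal.subset_span rfl)
end

section
/- Let p be a prime, n ≥ 0 an integer, and let K_p^n ⊆ GL₄(ℤ_p) be the subgroup of matrices whose last row is congruent to (0,0,0,1) mod p^n. Let P ⊆ GL₄ be the (2,2)-block upper-triangular parabolic subgroup, and let w₄, w₅, w₆ be the permutation matrices sending the standard basis (in column form) as specified: w₄ with rows (1,0,0,0),(0,0,0,1),(0,1,0,0),(0,0,1,0); w₅ with rows (0,1,0,0),(0,0,0,1),(1,0,0,0),(0,0,1,0); w₆ with rows (0,0,1,0),(0,0,0,1),(1,0,0,0),(0,1,0,0). Then the double cosets P(ℚ_p) w₄ K_p^n, P(ℚ_p) w₅ K_p^n, P(ℚ_p) w₆ K_p^n, and P(ℚ_p) ξ K_p^n all coincide, where ξ = I₄ + e₄₂ (the identity matrix with an extra 1 in position (4,2)). -/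
open Matrix

/-- The `(2,2)`-block upper-triangular parabolic subgroup `P(ℚ_p)` of `GL₄(ℚ_p)`,
viewed as the set of invertible matrices with vanishing lower-left `2×2` block. -/
def parabolicP (p : ℕ) [Fact p.Prime] : Set (Matrix (Fin 4) (Fin 4) ℚ_[p]) :=
  {g | IsUnit g.det ∧ g 2 0 = 0 ∧ g 2 1 = 0 ∧ g 3 0 = 0 ∧ g 3 1 = 0}

/-- The mirahoric subgroup `K_p^n ⊆ GL₄(ℤ_p)`: matrices with entries in `ℤ_p`, unit
determinant, whose last row is congruent to `(0,0,0,1)` modulo `p^n`. -/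
def mirahoric (p : ℕ) [Fact p.Prime] (n : ℕ) : Set (Matrix (Fin 4) (Fin 4) ℚ_[p]) :=
  {g | (∀ i j, ‖g i j‖ ≤ 1) ∧ ‖g.det‖ = 1 ∧
    ‖g 3 0‖ ≤ (p : ℝ) ^ (-(n : ℤ)) ∧ ‖g 3 1‖ ≤ (p : ℝ) ^ (-(n : ℤ)) ∧
    ‖g 3 2‖ ≤ (p : ℝ) ^ (-(n : ℤ)) ∧ ‖g 3 3 - 1‖ ≤ (p : ℝ) ^ (-(n : ℤ))}

/-- The double coset `P(ℚ_p) · w · K`. -/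
def doubleCoset (p : ℕ) [Fact p.Prime] (K : Set (Matrix (Fin 4) (Fin 4) ℚ_[p]))
    (w : Matrix (Fin 4) (Fin 4) ℚ_[p]) : Set (Matrix (Fin 4) (Fin 4) ℚ_[p]) :=
  {x | ∃ q ∈ parabolicP p, ∃ k ∈ K, x = q * w * k}

section Aux

variable {p : ℕ} [Fact p.Prime] {n : ℕ}

lemma aux_norm_add_four {c : ℝ} {x y z w : ℚ_[p]} (hx : ‖x‖ ≤ c) (hy : ‖y‖ ≤ c)
    (hz : ‖z‖ ≤ c) (hw : ‖w‖ ≤ c) : ‖x + y + z + w‖ ≤ c := by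
  refine le_trans (Padic.nonarchimedean _ _) (max_le ?_ hw)
  refine le_trans (Padic.nonarchimedean _ _) (max_le ?_ hz)
  exact le_trans (Padic.nonarchimedean _ _) (max_le hx hy)

lemma aux_mul_le_of_le_of_le_one {c : ℝ} {x y : ℚ_[p]} (hc : 0 ≤ c) (hx : ‖x‖ ≤ c)
    (hy : ‖y‖ ≤ 1) : ‖x * y‖ ≤ c := by
  rw [norm_mul]
  calc ‖x‖ * ‖y‖ ≤ c * 1 := mul_le_mul hx hy (norm_nonneg _) hc
  _ = c := mul_one c

lemma aux_mul_le_of_le_one_of_le {c : ℝ} {x y : ℚ_[p]} (hc : 0 ≤ c) (hx : ‖x‖ ≤ 1)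
    (hy : ‖y‖ ≤ c) : ‖x * y‖ ≤ c := by
  rw [mul_comm]; exact aux_mul_le_of_le_of_le_one hc hy hx

lemma parabolicP_mul {a b : Matrix (Fin 4) (Fin 4) ℚ_[p]} (ha : a ∈ parabolicP p)
    (hb : b ∈ parabolicP p) : a * b ∈ parabolicP p := by
  obtain ⟨hda, ha1, ha2, ha3, ha4⟩ := ha
  obtain ⟨hdb, hb1, hb2, hb3, hb4⟩ := hb
  refine ⟨?_, ?_, ?_, ?_, ?_⟩
  · rw [Matrix.det_mul]; exact hda.mul hdb
  all_goals
    simp [Matrix.mul_apply, Fin.sum_univ_four, ha1, ha2, ha3, ha4, hb1, hb2, hb3, hb4]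

lemma pc_nonneg : (0 : ℝ) ≤ (p : ℝ) ^ (-(n : ℤ)) := by positivity

lemma mirahoric_mul {a b : Matrix (Fin 4) (Fin 4) ℚ_[p]} (ha : a ∈ mirahoric p n)
    (hb : b ∈ mirahoric p n) : a * b ∈ mirahoric p n := by
  obtain ⟨hae, had, ha0, ha1, ha2, ha3⟩ := ha
  obtain ⟨hbe, hbd, hb0, hb1, hb2, hb3⟩ := hb
  have hc : (0 : ℝ) ≤ (p : ℝ) ^ (-(n : ℤ)) := pc_nonneg
  refine ⟨?_, ?_, ?_, ?_, ?_, ?_⟩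
  · intro i j
    rw [Matrix.mul_apply, Fin.sum_univ_four]
    exact aux_norm_add_four
      (aux_mul_le_of_le_of_le_one zero_le_one (hae i 0) (hbe 0 j))
      (aux_mul_le_of_le_of_le_one zero_le_one (hae i 1) (hbe 1 j))
      (aux_mul_le_of_le_of_le_one zero_le_one (hae i 2) (hbe 2 j))
      (aux_mul_le_of_le_of_le_one zero_le_one (hae i 3) (hbe 3 j))
  · rw [Matrix.det_mul, norm_mul, had, hbd, one_mul]
  · rw [Matrix.mul_apply, Fin.sum_univ_four]
    exact aux_norm_add_four
      (aux_mul_le_of_le_of_le_one hc ha0 (hbe 0 0))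
      (aux_mul_le_of_le_of_le_one hc ha1 (hbe 1 0))
      (aux_mul_le_of_le_of_le_one hc ha2 (hbe 2 0))
      (aux_mul_le_of_le_one_of_le hc (hae 3 3) hb0)
  · rw [Matrix.mul_apply, Fin.sum_univ_four]
    exact aux_norm_add_four
      (aux_mul_le_of_le_of_le_one hc ha0 (hbe 0 1))
      (aux_mul_le_of_le_of_le_one hc ha1 (hbe 1 1))
      (aux_mul_le_of_le_of_le_one hc ha2 (hbe 2 1))
      (aux_mul_le_of_le_one_of_le hc (hae 3 3) hb1)
  · rw [Matrix.mul_apply, Fin.sum_univ_four]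
    exact aux_norm_add_four
      (aux_mul_le_of_le_of_le_one hc ha0 (hbe 0 2))
      (aux_mul_le_of_le_of_le_one hc ha1 (hbe 1 2))
      (aux_mul_le_of_le_of_le_one hc ha2 (hbe 2 2))
      (aux_mul_le_of_le_one_of_le hc (hae 3 3) hb2)
  · have key : (a * b) 3 3 - 1 =
        a 3 0 * b 0 3 + a 3 1 * b 1 3 + a 3 2 * b 2 3 + ((a 3 3 - 1) * b 3 3 + (b 3 3 - 1)) := by
      rw [Matrix.mul_apply, Fin.sum_univ_four]; ring
    rw [key]
    refine aux_norm_add_four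
      (aux_mul_le_of_le_of_le_one hc ha0 (hbe 0 3))
      (aux_mul_le_of_le_of_le_one hc ha1 (hbe 1 3))
      (aux_mul_le_of_le_of_le_one hc ha2 (hbe 2 3)) ?_
    refine le_trans (Padic.nonarchimedean _ _) (max_le ?_ hb3)
    exact aux_mul_le_of_le_of_le_one hc ha3 (hbe 3 3)

lemma dc_eq {w w' q k q' k' : Matrix (Fin 4) (Fin 4) ℚ_[p]}
    (hq : q ∈ parabolicP p) (hk : k ∈ mirahoric p n)
    (hq' : q' ∈ parabolicP p) (hk' : k' ∈ mirahoric p n)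
    (h1 : w' = q * w * k) (h2 : w = q' * w' * k') :
    doubleCoset p (mirahoric p n) w = doubleCoset p (mirahoric p n) w' := by
  ext x
  constructor
  · rintro ⟨a, ha, b, hb, rfl⟩
    refine ⟨a * q', parabolicP_mul ha hq', k' * b, mirahoric_mul hk' hb, ?_⟩
    rw [h2]; noncomm_ring
  · rintro ⟨a, ha, b, hb, rfl⟩
    refine ⟨a * q, parabolicP_mul ha hq, k * b, mirahoric_mul hk hb, ?_⟩
    rw [h1]; noncomm_ring

lemma one_mem_P : (1 : Matrix (Fin 4) (Fin 4) ℚ_[p]) ∈ parabolicP p := by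
  refine ⟨by simp, ?_, ?_, ?_, ?_⟩ <;> simp [Matrix.one_apply]

end Aux

set_option maxHeartbeats 2000000 in
/-- the double cosets `P(ℚ_p) w₄ K_p^n`, `P(ℚ_p) w₅ K_p^n`,
`P(ℚ_p) w₆ K_p^n` and `P(ℚ_p) ξ K_p^n` all coincide, where `ξ = I₄ + e₄₂`. -/
theorem double_cosets_coincide (p : ℕ) [Fact p.Prime] (n : ℕ) :
    doubleCoset p (mirahoric p n) !![1, 0, 0, 0; 0, 0, 0, 1; 0, 1, 0, 0; 0, 0, 1, 0] =
      doubleCoset p (mirahoric p n) !![0, 1, 0, 0; 0, 0, 0, 1; 1, 0, 0, 0; 0, 0, 1, 0] ∧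
    doubleCoset p (mirahoric p n) !![0, 1, 0, 0; 0, 0, 0, 1; 1, 0, 0, 0; 0, 0, 1, 0] =
      doubleCoset p (mirahoric p n) !![0, 0, 1, 0; 0, 0, 0, 1; 1, 0, 0, 0; 0, 1, 0, 0] ∧
    doubleCoset p (mirahoric p n) !![0, 0, 1, 0; 0, 0, 0, 1; 1, 0, 0, 0; 0, 1, 0, 0] =
      doubleCoset p (mirahoric p n) !![1, 0, 0, 0; 0, 1, 0, 0; 0, 0, 1, 0; 0, 1, 0, 1] := by
  have hc : (0 : ℝ) ≤ (p : ℝ) ^ (-(n : ℤ)) := pc_nonneg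
  -- membership of the explicit auxiliary matrices
  have hk1 : (!![0, 1, 0, 0; 1, 0, 0, 0; 0, 0, 1, 0; 0, 0, 0, 1] :
      Matrix (Fin 4) (Fin 4) ℚ_[p]) ∈ mirahoric p n := by
    refine ⟨?_, ?_, ?_, ?_, ?_, ?_⟩
    · intro i j
      fin_cases i <;> fin_cases j <;> simp [Matrix.vecHead, Matrix.vecTail]
    · simp only [Matrix.det_succ_row_zero, Fin.sum_univ_succ, Matrix.submatrix_apply, Fin.zero_succAbove, Fin.succ_succAbove_zero, Fin.succ_succAbove_succ, Matrix.of_apply, Matrix.cons_val_succ, Matrix.cons_val_zero, Matrix.det_unique, Fin.default_eq_zero, Fin.sum_univ_zero]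
      norm_num
    all_goals simp [Matrix.vecHead, Matrix.vecTail]
  have hk2 : (!![1, 0, 0, 0; 0, 0, 1, 0; 0, 1, 0, 0; 0, 0, 0, 1] :
      Matrix (Fin 4) (Fin 4) ℚ_[p]) ∈ mirahoric p n := by
    refine ⟨?_, ?_, ?_, ?_, ?_, ?_⟩
    · intro i j
      fin_cases i <;> fin_cases j <;> simp [Matrix.vecHead, Matrix.vecTail]
    · simp only [Matrix.det_succ_row_zero, Fin.sum_univ_succ, Matrix.submatrix_apply, Fin.zero_succAbove, Fin.succ_succAbove_zero, Fin.succ_succAbove_succ, Matrix.of_apply, Matrix.cons_val_succ, Matrix.cons_val_zero, Matrix.det_unique, Fin.default_eq_zero, Fin.sum_univ_zero]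
      norm_num
    all_goals simp [Matrix.vecHead, Matrix.vecTail]
  have hk3 : (!![0, 0, 1, 0; 0, 1, 0, -1; 1, 0, 0, 0; 0, 0, 0, 1] :
      Matrix (Fin 4) (Fin 4) ℚ_[p]) ∈ mirahoric p n := by
    refine ⟨?_, ?_, ?_, ?_, ?_, ?_⟩
    · intro i j
      fin_cases i <;> fin_cases j <;> simp [Matrix.vecHead, Matrix.vecTail]
    · simp only [Matrix.det_succ_row_zero, Fin.sum_univ_succ, Matrix.submatrix_apply, Fin.zero_succAbove, Fin.succ_succAbove_zero, Fin.succ_succAbove_succ, Matrix.of_apply, Matrix.cons_val_succ, Matrix.cons_val_zero, Matrix.det_unique, Fin.default_eq_zero, Fin.sum_univ_zero]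
      norm_num
    all_goals simp [Matrix.vecHead, Matrix.vecTail]
  have hk4 : (!![0, 0, 1, 0; 0, 1, 0, 1; 1, 0, 0, 0; 0, 0, 0, 1] :
      Matrix (Fin 4) (Fin 4) ℚ_[p]) ∈ mirahoric p n := by
    refine ⟨?_, ?_, ?_, ?_, ?_, ?_⟩
    · intro i j
      fin_cases i <;> fin_cases j <;> simp [Matrix.vecHead, Matrix.vecTail]
    · simp only [Matrix.det_succ_row_zero, Fin.sum_univ_succ, Matrix.submatrix_apply, Fin.zero_succAbove, Fin.succ_succAbove_zero, Fin.succ_succAbove_succ, Matrix.of_apply, Matrix.cons_val_succ, Matrix.cons_val_zero, Matrix.det_unique, Fin.default_eq_zero, Fin.sum_univ_zero]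
      norm_num
    all_goals simp [Matrix.vecHead, Matrix.vecTail]
  have hr : (!![1, 0, 0, 0; 0, -1, 0, 1; 0, 0, 1, 0; 0, 0, 0, 1] :
      Matrix (Fin 4) (Fin 4) ℚ_[p]) ∈ parabolicP p := by
    refine ⟨?_, by simp [Matrix.vecHead, Matrix.vecTail], by simp [Matrix.vecHead, Matrix.vecTail], by simp [Matrix.vecHead, Matrix.vecTail], by simp [Matrix.vecHead, Matrix.vecTail]⟩
    rw [isUnit_iff_ne_zero]
    simp only [Matrix.det_succ_row_zero, Fin.sum_univ_succ, Matrix.submatrix_apply, Fin.zero_succAbove, Fin.succ_succAbove_zero, Fin.succ_succAbove_succ, Matrix.of_apply, Matrix.cons_val_succ, Matrix.cons_val_zero, Matrix.det_unique, Fin.default_eq_zero, Fin.sum_univ_zero]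
    norm_num
  refine ⟨?_, ?_, ?_⟩
  · refine dc_eq one_mem_P hk1 one_mem_P hk1 ?_ ?_ <;>
      · ext i j
        fin_cases i <;> fin_cases j <;>
          norm_num [Matrix.mul_apply, Fin.sum_univ_succ, Matrix.vecHead, Matrix.vecTail]
  · refine dc_eq one_mem_P hk2 one_mem_P hk2 ?_ ?_ <;>
      · ext i j
        fin_cases i <;> fin_cases j <;>
          norm_num [Matrix.mul_apply, Fin.sum_univ_succ, Matrix.vecHead, Matrix.vecTail]
  · refine dc_eq hr hk4 hr hk3 ?_ ?_ <;>
      · ext i j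
        fin_cases i <;> fin_cases j <;>
          norm_num [Matrix.mul_apply, Fin.sum_univ_succ]
end

section
/- Let p be a prime, n ≥ 0, and ξ = I₄ + e₄₂ ∈ GL₄(ℤ_p). Let P ⊆ GL₄ be the (2,2)-parabolic with Levi projection κ : P → GL₂ × GL₂ (upper-left and lower-right blocks). Then κ(P(ℚ_p) ∩ ξ K_p^n ξ⁻¹) = K_p(n) × GL₂(ℤ_p), where K_p(n) ⊆ GL₂(ℤ_p) is the subgroup of matrices whose bottom row is congruent to (0,1) mod p^n, and K_p^n ⊆ GL₄(ℤ_p) is the mirahoric subgroup of matrices with bottom row ≡ (0,0,0,1) mod p^n. -/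
open Matrix

/-- Upper-left `2×2` block. -/
def ulBlock (p : ℕ) [Fact p.Prime] (g : Matrix (Fin 4) (Fin 4) ℚ_[p]) :
    Matrix (Fin 2) (Fin 2) ℚ_[p] :=
  fun i j => g ⟨i.1, by omega⟩ ⟨j.1, by omega⟩

/-- Lower-right `2×2` block. -/
def lrBlock (p : ℕ) [Fact p.Prime] (g : Matrix (Fin 4) (Fin 4) ℚ_[p]) :
    Matrix (Fin 2) (Fin 2) ℚ_[p] :=
  fun i j => g ⟨i.1 + 2, by omega⟩ ⟨j.1 + 2, by omega⟩

/-- `K_p(n) ⊆ GL₂(ℤ_p)`: bottom row congruent to `(0,1)` mod `p^n`. -/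
def mirahoric2 (p : ℕ) [Fact p.Prime] (n : ℕ) : Set (Matrix (Fin 2) (Fin 2) ℚ_[p]) :=
  {g | (∀ i j, ‖g i j‖ ≤ 1) ∧ ‖g.det‖ = 1 ∧
    ‖g 1 0‖ ≤ (p : ℝ) ^ (-(n : ℤ)) ∧ ‖g 1 1 - 1‖ ≤ (p : ℝ) ^ (-(n : ℤ))}

/-- `GL₂(ℤ_p)` as a set of `2×2` matrices over `ℚ_p`. -/
def GL2Zp (p : ℕ) [Fact p.Prime] : Set (Matrix (Fin 2) (Fin 2) ℚ_[p]) :=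
  {g | (∀ i j, ‖g i j‖ ≤ 1) ∧ ‖g.det‖ = 1}

/-!
Conjugation by `ξ = 1 + e₄₂` adds the second row to the fourth and subtracts the fourth column
from the second, so the blocks of `ξ k ξ⁻¹` have integral entries, and the vanishing of its
lower-left block turns the congruences on the bottom row of `k` into the `K_p(n)` congruences
on the upper-left block. As `det (ξ k ξ⁻¹) = det k` is a unit and both block determinants are
integral, both are units. Conversely `(A B; 0 D)` with `B = (0 0; D₁₀ D₁₁ - 1)` equals
`ξ k ξ⁻¹` for an integral `k` with bottom row `(-A₁₀, 1 - A₁₁, 0, 1)`.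
-/

local notation "ξ" => !![1, 0, 0, 0; 0, 1, 0, 0; 0, 0, 1, 0; 0, 1, 0, 1]

theorem Matrix.det_mem_of_forall_mem {ι R S : Type*} [Fintype ι] [DecidableEq ι] [CommRing R]
    [SetLike S R] [SubringClass S R] {s : S} {M : Matrix ι ι R} (h : ∀ i j, M i j ∈ s) :
    M.det ∈ s := by
  rw [det_apply]
  exact sum_mem fun σ _ => zsmul_mem (prod_mem fun i _ => h _ _) _

namespace IsUltrametricDist

variable {S : Type*} [SeminormedAddGroup S] [IsUltrametricDist S] {a b : S} {r : ℝ}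

theorem norm_add_le_of_le (ha : ‖a‖ ≤ r) (hb : ‖b‖ ≤ r) : ‖a + b‖ ≤ r :=
  (norm_add_le_max a b).trans (max_le ha hb)

theorem norm_sub_le_of_le (ha : ‖a‖ ≤ r) (hb : ‖b‖ ≤ r) : ‖a - b‖ ≤ r := by
  rw [sub_eq_add_neg]
  exact norm_add_le_of_le ha (by rwa [norm_neg])

end IsUltrametricDist

section CommRing

variable {R : Type*} [CommRing R]

theorem det_xi : (ξ : Matrix (Fin 4) (Fin 4) R).det = 1 := by
  simp [det_succ_row_zero, Fin.sum_univ_succ]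

theorem isUnit_xi : IsUnit (ξ : Matrix (Fin 4) (Fin 4) R) :=
  (isUnit_iff_isUnit_det _).mpr (by rw [det_xi]; exact isUnit_one)

theorem xi_inv : (ξ : Matrix (Fin 4) (Fin 4) R)⁻¹ =
    !![1, 0, 0, 0; 0, 1, 0, 0; 0, 0, 1, 0; 0, -1, 0, 1] := by
  refine inv_eq_right_inv ?_
  ext i j
  fin_cases i <;> fin_cases j <;> simp [mul_apply, Fin.sum_univ_four]

theorem xi_mul_mul_xi_inv (k : Matrix (Fin 4) (Fin 4) R) :
    ξ * k * ξ⁻¹ =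
      !![k 0 0, k 0 1 - k 0 3, k 0 2, k 0 3;
         k 1 0, k 1 1 - k 1 3, k 1 2, k 1 3;
         k 2 0, k 2 1 - k 2 3, k 2 2, k 2 3;
         k 3 0 + k 1 0, k 3 1 + k 1 1 - (k 3 3 + k 1 3), k 3 2 + k 1 2, k 3 3 + k 1 3] := by
  rw [xi_inv]
  ext i j
  fin_cases i <;> fin_cases j <;> simp [mul_apply, vecMul, dotProduct, Fin.sum_univ_four] <;> ring

end CommRing

variable {p : ℕ} [Fact p.Prime]

theorem ulBlock_eq (g : Matrix (Fin 4) (Fin 4) ℚ_[p]) :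
    ulBlock p g = !![g 0 0, g 0 1; g 1 0, g 1 1] := by
  ext i j; fin_cases i <;> fin_cases j <;> rfl

theorem lrBlock_eq (g : Matrix (Fin 4) (Fin 4) ℚ_[p]) :
    lrBlock p g = !![g 2 2, g 2 3; g 3 2, g 3 3] := by
  ext i j; fin_cases i <;> fin_cases j <;> rfl

theorem det_eq_det_ulBlock_mul_det_lrBlock {g : Matrix (Fin 4) (Fin 4) ℚ_[p]}
    (h20 : g 2 0 = 0) (h21 : g 2 1 = 0) (h30 : g 3 0 = 0) (h31 : g 3 1 = 0) :
    g.det = (ulBlock p g).det * (lrBlock p g).det := by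
  let e : Fin 2 ⊕ Fin 2 ≃ Fin 4 := finSumFinEquiv
  have hblocks : g.submatrix e e =
      fromBlocks (ulBlock p g) (fun i j => g ⟨i, by omega⟩ ⟨j.1 + 2, by omega⟩) 0
        (lrBlock p g) := by
    ext (i | i) (j | j) <;> fin_cases i <;> fin_cases j
    all_goals first | rfl | assumption
  rw [← det_submatrix_equiv_self e g, hblocks]
  exact det_fromBlocks_zero₂₁ _ _ _

theorem norm_det_le_one {ι : Type*} [Fintype ι] [DecidableEq ι] {M : Matrix ι ι ℚ_[p]}
    (h : ∀ i j, ‖M i j‖ ≤ 1) : ‖M.det‖ ≤ 1 :=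
  det_mem_of_forall_mem (s := PadicInt.subring p) h

theorem norm_det_eq_one_of_norm_det_mul_det_eq_one {ι : Type*} [Fintype ι] [DecidableEq ι]
    {A D : Matrix ι ι ℚ_[p]} (hA : ∀ i j, ‖A i j‖ ≤ 1) (hD : ∀ i j, ‖D i j‖ ≤ 1)
    (h : ‖A.det * D.det‖ = 1) : ‖A.det‖ = 1 ∧ ‖D.det‖ = 1 := by
  have hA1 := norm_det_le_one hA
  have hD1 := norm_det_le_one hD
  rw [norm_mul] at h
  constructor <;> nlinarith [norm_nonneg A.det, norm_nonneg D.det]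

theorem ulBlock_xi_mul_mul_xi_inv (k : Matrix (Fin 4) (Fin 4) ℚ_[p]) :
    ulBlock p (ξ * k * ξ⁻¹) = !![k 0 0, k 0 1 - k 0 3; k 1 0, k 1 1 - k 1 3] := by
  rw [ulBlock_eq, xi_mul_mul_xi_inv]; simp

theorem lrBlock_xi_mul_mul_xi_inv (k : Matrix (Fin 4) (Fin 4) ℚ_[p]) :
    lrBlock p (ξ * k * ξ⁻¹) = !![k 2 2, k 2 3; k 3 2 + k 1 2, k 3 3 + k 1 3] := by
  rw [lrBlock_eq, xi_mul_mul_xi_inv]; simp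

theorem ulBlock_mem_and_lrBlock_mem_of_conj_mem {n : ℕ} {k : Matrix (Fin 4) (Fin 4) ℚ_[p]}
    (hk : k ∈ mirahoric p n) (hP : ξ * k * ξ⁻¹ ∈ parabolicP p) :
    ulBlock p (ξ * k * ξ⁻¹) ∈ mirahoric2 p n ∧ lrBlock p (ξ * k * ξ⁻¹) ∈ GL2Zp p := by
  obtain ⟨hint, hdet, hk30, hk31, -, hk33⟩ := hk
  obtain ⟨-, h20, h21, h30, h31⟩ := hP
  have hdet_blocks := det_eq_det_ulBlock_mul_det_lrBlock h20 h21 h30 h31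
  rw [det_conj isUnit_xi] at hdet_blocks
  rw [xi_mul_mul_xi_inv] at h30 h31
  simp only [of_apply, cons_val', cons_val_zero, cons_val_fin_one, cons_val, cons_val_one]
    at h30 h31
  rw [ulBlock_xi_mul_mul_xi_inv, lrBlock_xi_mul_mul_xi_inv] at hdet_blocks ⊢
  have hA : ∀ i j, ‖!![k 0 0, k 0 1 - k 0 3; k 1 0, k 1 1 - k 1 3] i j‖ ≤ 1 := by
    simp only [Fin.forall_fin_two, of_apply, cons_val', cons_val_zero, cons_val_one, empty_val',
      cons_val_fin_one]
    exact ⟨⟨hint 0 0, IsUltrametricDist.norm_sub_le_of_le (hint 0 1) (hint 0 3)⟩, hint 1 0,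
      IsUltrametricDist.norm_sub_le_of_le (hint 1 1) (hint 1 3)⟩
  have hD : ∀ i j, ‖!![k 2 2, k 2 3; k 3 2 + k 1 2, k 3 3 + k 1 3] i j‖ ≤ 1 := by
    simp only [Fin.forall_fin_two, of_apply, cons_val', cons_val_zero, cons_val_one, empty_val',
      cons_val_fin_one]
    exact ⟨⟨hint 2 2, hint 2 3⟩, IsUltrametricDist.norm_add_le_of_le (hint 3 2) (hint 1 2),
      IsUltrametricDist.norm_add_le_of_le (hint 3 3) (hint 1 3)⟩
  obtain ⟨hAdet, hDdet⟩ :=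
    norm_det_eq_one_of_norm_det_mul_det_eq_one hA hD (hdet_blocks ▸ hdet)
  refine ⟨⟨hA, hAdet, ?_, ?_⟩, hD, hDdet⟩
  · simpa [eq_neg_of_add_eq_zero_right h30] using hk30
  · simpa [show k 1 1 - k 1 3 - 1 = (k 3 3 - 1) - k 3 1 by linear_combination h31] using
      IsUltrametricDist.norm_sub_le_of_le hk33 hk31

theorem exists_conj_mem_of_mem_mirahoric2 {n : ℕ} {A D : Matrix (Fin 2) (Fin 2) ℚ_[p]}
    (hA : A ∈ mirahoric2 p n) (hD : D ∈ GL2Zp p) :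
    ∃ k ∈ mirahoric p n, ξ * k * ξ⁻¹ ∈ parabolicP p ∧
      ulBlock p (ξ * k * ξ⁻¹) = A ∧ lrBlock p (ξ * k * ξ⁻¹) = D := by
  obtain ⟨hAint, hAdet, hA10, hA11⟩ := hA
  obtain ⟨hDint, hDdet⟩ := hD
  let g : Matrix (Fin 4) (Fin 4) ℚ_[p] :=
    !![A 0 0, A 0 1, 0, 0;
       A 1 0, A 1 1, D 1 0, D 1 1 - 1;
       0, 0, D 0 0, D 0 1;
       0, 0, D 1 0, D 1 1]
  let k : Matrix (Fin 4) (Fin 4) ℚ_[p] :=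
    !![A 0 0, A 0 1, 0, 0;
       A 1 0, A 1 1 + D 1 1 - 1, D 1 0, D 1 1 - 1;
       0, D 0 1, D 0 0, D 0 1;
       -A 1 0, 1 - A 1 1, 0, 1]
  have hconj : ξ * k * ξ⁻¹ = g := by
    rw [xi_mul_mul_xi_inv]
    ext i j
    fin_cases i <;> fin_cases j <;> simp [k, g]
  have hul : ulBlock p g = A := by
    rw [ulBlock_eq]; ext i j; fin_cases i <;> fin_cases j <;> rfl
  have hlr : lrBlock p g = D := by
    rw [lrBlock_eq]; ext i j; fin_cases i <;> fin_cases j <;> rfl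
  have hdet : ‖g.det‖ = 1 := by
    rw [det_eq_det_ulBlock_mul_det_lrBlock rfl rfl rfl rfl, hul, hlr, norm_mul, hAdet, hDdet,
      one_mul]
  refine ⟨k, ⟨?_, by rw [← det_conj isUnit_xi k, hconj, hdet], ?_, ?_, ?_, ?_⟩, ?_⟩
  · intro i j
    have hAint' : ∀ i j, A i j ∈ PadicInt.subring p := hAint
    have hDint' : ∀ i j, D i j ∈ PadicInt.subring p := hDint
    fin_cases i <;> fin_cases j <;> simp [k] <;> change _ ∈ PadicInt.subring p <;>
      apply_rules [sub_mem, add_mem, neg_mem, one_mem]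
  · simpa [k] using hA10
  · simpa [k, norm_sub_rev] using hA11
  · simp [k]
  · simp [k]
  · rw [hconj]
    exact ⟨⟨isUnit_iff_ne_zero.mpr (norm_ne_zero_iff.mp (hdet ▸ one_ne_zero)), rfl, rfl, rfl, rfl⟩,
      hul, hlr⟩

/-- with `ξ = I₄ + e₄₂`, the Levi projection of
`P(ℚ_p) ∩ ξ K_p^n ξ⁻¹` is `K_p(n) × GL₂(ℤ_p)`. -/
theorem levi_projection_xi0 (p : ℕ) [Fact p.Prime] (n : ℕ) :
    (fun g => (ulBlock p g, lrBlock p g)) ''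
        (parabolicP p ∩
          {g | ∃ k ∈ mirahoric p n,
            g = !![1, 0, 0, 0; 0, 1, 0, 0; 0, 0, 1, 0; 0, 1, 0, 1] * k *
              (!![1, 0, 0, 0; 0, 1, 0, 0; 0, 0, 1, 0; 0, 1, 0, 1])⁻¹}) =
      (mirahoric2 p n) ×ˢ (GL2Zp p) := by
  ext ⟨A, D⟩
  constructor
  · rintro ⟨_, ⟨hP, k, hk, rfl⟩, hAD⟩
    rw [← hAD]
    exact ulBlock_mem_and_lrBlock_mem_of_conj_mem hk hP
  · rintro ⟨hA, hD⟩
    obtain ⟨k, hk, hP, hul, hlr⟩ := exists_conj_mem_of_mem_mirahoric2 hA hD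
    exact ⟨ξ * k * ξ⁻¹, ⟨hP, k, hk, rfl⟩, Prod.ext hul hlr⟩
end

section
/- Let G be a group acting on a set X, H ≤ G a subgroup, and V an H-representation over a field. For K ≤ G an open-compact-type subgroup and the induced module Ind(V) = {φ : G → V : φ(hg) = h·φ(g)}, the map φ ↦ (φ(ξ))_ξ, where ξ runs over a set of representatives of the double cosets H\G/K, induces an isomorphism Ind(V)^K ≅ ⊕_ξ V^{H(ξ)}, where H(ξ) = H ∩ ξKξ⁻¹ acts on V through H. -/
/-!
A function in `Ind(V)^K` is determined by its values on the representatives, since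
`φ (h * ξ * k) = ρ h (φ ξ)`; this formula forces `φ ξ` to be fixed by `H(ξ)`. Conversely a
family `f ξ ∈ V^{H(ξ)}` extends by the same formula: if `h * ξ * k = h' * ξ * k'` then
`h'⁻¹ * h = ξ * (k' * k⁻¹) * ξ⁻¹` lies in `H(ξ)`, so `ρ h (f ξ) = ρ h' (f ξ)`.
-/

namespace Mackey

variable {G : Type*} [Group G] {H : Subgroup G} (K : Subgroup G)
  {R V : Type*} [CommSemiring R] [AddCommMonoid V] [Module R V] (ρ : Representation R H V)

/-- `Ind(V)^K`; below, `fixedAt K ρ ξ` is `V^{H(ξ)}` with `H(ξ) = H ∩ ξKξ⁻¹`. -/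
def indFixed : Set (G → V) :=
  {φ | (∀ (h : H) (g : G), φ ((h : G) * g) = ρ h (φ g)) ∧
    ∀ (k : K) (g : G), φ (g * (k : G)) = φ g}

def fixedAt (ξ : G) : Set V :=
  {v | ∀ (h : H) (k : K), (h : G) = ξ * (k : G) * ξ⁻¹ → ρ h v = v}

variable {K ρ}

theorem apply_mul_mul_of_mem_indFixed {φ : G → V} (hφ : φ ∈ indFixed K ρ)
    (h : H) (ξ : G) (k : K) : φ ((h : G) * ξ * k) = ρ h (φ ξ) := by
  rw [hφ.2, hφ.1]

theorem apply_mem_fixedAt {φ : G → V} (hφ : φ ∈ indFixed K ρ) (ξ : G) :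
    φ ξ ∈ fixedAt K ρ ξ := by
  intro h k hh
  have hξ : (h : G) * ξ = ξ * k := by rw [hh, inv_mul_cancel_right]
  rw [← hφ.1, hξ, hφ.2]

theorem rep_apply_eq_of_mul_mul_eq {ξ : G} {v : V} (hv : v ∈ fixedAt K ρ ξ)
    {h h' : H} {k k' : K} (he : (h : G) * ξ * k = h' * ξ * k') : ρ h v = ρ h' v := by
  have hconj : ((h'⁻¹ * h : H) : G) = ξ * ((k' * k⁻¹ : K) : G) * ξ⁻¹ := by
    push_cast
    calc (h' : G)⁻¹ * h = (h' : G)⁻¹ * (h * ξ * k) * (k : G)⁻¹ * ξ⁻¹ := by group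
      _ = _ := by rw [he]; group
  calc ρ h v = ρ (h' * (h'⁻¹ * h)) v := by rw [mul_inv_cancel_left]
    _ = ρ h' (ρ (h'⁻¹ * h) v) := by rw [map_mul, Module.End.mul_apply]
    _ = ρ h' v := by rw [hv _ _ hconj]

variable {Ξ : Set G}

theorem injOn_restrict_indFixed (hrep : ∀ g : G, ∃ (ξ : Ξ) (h : H) (k : K), g = h * ξ * k) :
    Set.InjOn (fun (φ : G → V) (ξ : Ξ) => φ ξ) (indFixed K ρ) := by
  intro φ hφ φ' hφ' heq
  funext g
  obtain ⟨ξ, h, k, rfl⟩ := hrep g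
  rw [apply_mul_mul_of_mem_indFixed hφ, apply_mul_mul_of_mem_indFixed hφ',
    show φ ξ = φ' ξ from congrFun heq ξ]

theorem mem_indFixed_of_forall_apply_mul_mul_eq
    (hrep : ∀ g : G, ∃ (ξ : Ξ) (h : H) (k : K), g = h * ξ * k) {f : Ξ → V} {φ : G → V}
    (hφ : ∀ (ξ : Ξ) (h : H) (k : K), φ ((h : G) * ξ * k) = ρ h (f ξ)) :
    φ ∈ indFixed K ρ := by
  constructor
  · intro h₀ g
    obtain ⟨ξ, h, k, rfl⟩ := hrep g
    rw [← mul_assoc, ← mul_assoc, ← Subgroup.coe_mul, hφ, hφ, map_mul, Module.End.mul_apply]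
  · intro k₀ g
    obtain ⟨ξ, h, k, rfl⟩ := hrep g
    rw [mul_assoc _ (k : G), ← Subgroup.coe_mul, hφ, hφ]

theorem exists_forall_apply_mul_mul_eq
    (hrep : ∀ g : G, ∃ (ξ : Ξ) (h : H) (k : K), g = h * ξ * k)
    (hdistinct : ∀ (ξ ξ' : Ξ) (h : H) (k : K), (ξ' : G) = h * ξ * k → ξ = ξ')
    {f : Ξ → V} (hf : ∀ ξ : Ξ, f ξ ∈ fixedAt K ρ ξ) :
    ∃ φ : G → V, ∀ (ξ : Ξ) (h : H) (k : K), φ ((h : G) * ξ * k) = ρ h (f ξ) := by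
  choose ξ h k hg using hrep
  refine ⟨fun g => ρ (h g) (f (ξ g)), fun ξ₀ h₀ k₀ => ?_⟩
  show ρ (h _) (f (ξ _)) = _
  generalize hg₀ : (h₀ : G) * ξ₀ * k₀ = g
  have hξ : ξ g = ξ₀ := Eq.symm <| hdistinct ξ₀ (ξ g) ((h g)⁻¹ * h₀) (k₀ * (k g)⁻¹) <|
    calc (ξ g : G) = (h g : G)⁻¹ * (h g * ξ g * k g) * (k g : G)⁻¹ := by group
      _ = _ := by rw [← hg g, ← hg₀]; push_cast; group
  have he : (h g : G) * ξ₀ * k g = h₀ * ξ₀ * k₀ := by rw [hg₀, ← hξ, ← hg g]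
  rw [hξ]
  exact rep_apply_eq_of_mul_mul_eq (hf _) he

theorem surjOn_restrict_indFixed
    (hrep : ∀ g : G, ∃ (ξ : Ξ) (h : H) (k : K), g = h * ξ * k)
    (hdistinct : ∀ (ξ ξ' : Ξ) (h : H) (k : K), (ξ' : G) = h * ξ * k → ξ = ξ') :
    Set.SurjOn (fun (φ : G → V) (ξ : Ξ) => φ ξ) (indFixed K ρ)
      {f | ∀ ξ : Ξ, f ξ ∈ fixedAt K ρ ξ} := by
  intro f hf
  obtain ⟨φ, hφ⟩ := exists_forall_apply_mul_mul_eq hrep hdistinct hf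
  refine ⟨φ, mem_indFixed_of_forall_apply_mul_mul_eq hrep hφ, funext fun ξ => ?_⟩
  simpa using hφ ξ 1 1

theorem bijOn_restrict_indFixed
    (hrep : ∀ g : G, ∃ (ξ : Ξ) (h : H) (k : K), g = h * ξ * k)
    (hdistinct : ∀ (ξ ξ' : Ξ) (h : H) (k : K), (ξ' : G) = h * ξ * k → ξ = ξ') :
    Set.BijOn (fun (φ : G → V) (ξ : Ξ) => φ ξ) (indFixed K ρ)
      {f | ∀ ξ : Ξ, f ξ ∈ fixedAt K ρ ξ} :=
  ⟨fun _ hφ ξ => apply_mem_fixedAt hφ ξ, injOn_restrict_indFixed hrep,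
    surjOn_restrict_indFixed hrep hdistinct⟩

end Mackey

/-- Mackey decomposition: let `G` be a group, `H, K ≤ G` subgroups,
`V` an `H`-representation over a field `E` via `ρ`, and `Ξ` a finite set of
representatives for the double cosets `H\G/K`.  Then the evaluation map
`φ ↦ (φ(ξ))_{ξ ∈ Ξ}` is a bijection from the `K`-invariants of the induced module
`Ind(V) = {φ : G → V | φ(hg) = h·φ(g)}` onto `⊕_ξ V^{H(ξ)}`, where
`H(ξ) = H ∩ ξKξ⁻¹`. -/
theorem mackey_decomposition (G : Type*) [Group G] (H K : Subgroup G)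
    (E V : Type*) [Field E] [AddCommGroup V] [Module E V]
    (ρ : Representation E H V)
    (Ξ : Finset G)
    (hrep : ∀ g : G, ∃ ξ ∈ Ξ, ∃ h ∈ H, ∃ k ∈ K, g = h * ξ * k)
    (hdistinct : ∀ ξ ∈ Ξ, ∀ ξ' ∈ Ξ, (∃ h ∈ H, ∃ k ∈ K, ξ' = h * ξ * k) → ξ = ξ') :
    Set.BijOn (fun (φ : G → V) (ξ : Ξ) => φ ξ.1)
      {φ : G → V | (∀ (h : H) (g : G), φ ((h : G) * g) = ρ h (φ g)) ∧
        (∀ (k : K) (g : G), φ (g * (k : G)) = φ g)}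
      {f : Ξ → V | ∀ (ξ : Ξ) (h : H) (k : K),
        (h : G) = ξ.1 * (k : G) * ξ.1⁻¹ → ρ h (f ξ) = f ξ} := by
  refine Mackey.bijOn_restrict_indFixed (Ξ := (Ξ : Set G)) (fun g => ?_)
    fun ξ ξ' h k he => Subtype.ext (hdistinct _ ξ.2 _ ξ'.2 ⟨h, h.2, k, k.2, he⟩)
  obtain ⟨ξ, hξ, h, hh, k, hk, rfl⟩ := hrep g
  exact ⟨⟨ξ, hξ⟩, ⟨h, hh⟩, ⟨k, hk⟩, rfl⟩
end
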